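/- arXiv:1705.02247 — 3 statements merged into one kernel-verified Lean document; each statement's English description precedes it below -/
import Mathlib

section
/- Let P be a PMF on a finite set X, let M be a positive integer, let f : X → {1,…,M}, let L(x) = |{x' ∈ X : f(x') = f(x)}|, and let ρ > 0 with ρ̃ = 1/(1+ρ). Then E[L(X)^ρ] ≥ 2^{ρ·[H_{ρ̃}(P) − log₂ M]}, i.e., the ρ-th moment of the list size is at least 2 raised to ρ times the difference between the Rényi entropy of order 1/(1+ρ) of P and log₂ M. -/
/-- `P` is a probability mass function on the finite type `X`. -/
def IsPMF {X : Type*} [Fintype X] (P : X → ℝ) : Prop :=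
  (∀ x, 0 ≤ P x) ∧ ∑ x, P x = 1

/-- Rényi entropy of order `α` (base-2 logarithm). -/
noncomputable def renyiEntropy {X : Type*} [Fintype X] (α : ℝ) (P : X → ℝ) : ℝ :=
  (1 - α)⁻¹ * Real.logb 2 (∑ x, P x ^ α)

/-- The list size of `x` under encoder `f`. -/
noncomputable def listSize {X : Type*} [Fintype X] {M : ℕ} (f : X → Fin M) (x : X) : ℕ :=
  (Finset.univ.filter (fun x' => f x' = f x)).card

/-!
Write `L = listSize f`. Hölder's inequality with weights `L⁻¹` and exponent `1 + ρ`, applied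
to `P^{1/(1+ρ)} = L⁻¹ · (L · P^{1/(1+ρ)})`, gives
`(∑ P^{1/(1+ρ)})^{1+ρ} ≤ E[L^ρ] · (∑ L⁻¹)^ρ`. Every nonempty fibre of `f` contributes exactly `1`
to `∑ L⁻¹`, so `∑ L⁻¹ ≤ M`, and the left side is `2^{ρ H_{1/(1+ρ)}(P)}`.
-/

open Finset Real

theorem sum_inv_card_fiber_eq_card_image {X Y : Type*} [Fintype X] [DecidableEq Y] (f : X → Y) :
    ∑ x, ((univ.filter fun x' => f x' = f x).card : ℝ)⁻¹ = (univ.image f).card := by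
  rw [sum_comp (fun y => ((univ.filter fun x' => f x' = y).card : ℝ)⁻¹) f, card_eq_sum_ones,
    Nat.cast_sum]
  refine sum_congr rfl fun y hy => ?_
  obtain ⟨x, -, rfl⟩ := mem_image.1 hy
  have hfiber : (univ.filter fun x' => f x' = f x).card ≠ 0 :=
    (card_pos.2 ⟨x, by simp⟩).ne'
  rw [nsmul_eq_mul, mul_inv_cancel₀ (Nat.cast_ne_zero.2 hfiber), Nat.cast_one]

theorem listSize_pos {X : Type*} [Fintype X] {M : ℕ} (f : X → Fin M) (x : X) :
    0 < listSize f x :=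
  card_pos.2 ⟨x, by simp⟩

theorem sum_inv_listSize_le {X : Type*} [Fintype X] {M : ℕ} (f : X → Fin M) :
    ∑ x, (listSize f x : ℝ)⁻¹ ≤ M := by
  calc _ = ((univ.image f).card : ℝ) := sum_inv_card_fiber_eq_card_image f
    _ ≤ M := by exact_mod_cast (card_le_univ _).trans (Fintype.card_fin M).le

theorem sum_rpow_inv_rpow_le_sum_mul_rpow_mul {ι : Type*} (s : Finset ι) {p : ℝ} (hp : 1 ≤ p)
    {P L : ι → ℝ} (hP : ∀ i, 0 ≤ P i) (hL : ∀ i, 0 < L i) :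
    (∑ i ∈ s, P i ^ p⁻¹) ^ p ≤
      (∑ i ∈ s, P i * L i ^ (p - 1)) * (∑ i ∈ s, (L i)⁻¹) ^ (p - 1) := by
  have hp0 : p ≠ 0 := by positivity
  have holder := inner_le_weight_mul_Lp_of_nonneg s hp (fun i => (L i)⁻¹)
    (fun i => L i * P i ^ p⁻¹) (fun i => (inv_pos.2 (hL i)).le)
    (fun i => mul_nonneg (hL i).le (rpow_nonneg (hP i) _))
  have hweighted : ∀ i, (L i)⁻¹ * (L i * P i ^ p⁻¹) ^ p = P i * L i ^ (p - 1) := fun i => by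
    rw [mul_rpow (hL i).le (rpow_nonneg (hP i) _), rpow_inv_rpow (hP i) hp0,
      rpow_sub_one (hL i).ne']
    ring
  simp only [inv_mul_cancel_left₀ (hL _).ne', hweighted] at holder
  have hT : 0 ≤ ∑ i ∈ s, (L i)⁻¹ := sum_nonneg fun i _ => (inv_pos.2 (hL i)).le
  have hS : 0 ≤ ∑ i ∈ s, P i * L i ^ (p - 1) :=
    sum_nonneg fun i _ => mul_nonneg (hP i) (rpow_nonneg (hL i).le _)
  calc (∑ i ∈ s, P i ^ p⁻¹) ^ p
      ≤ ((∑ i ∈ s, (L i)⁻¹) ^ (1 - p⁻¹) * (∑ i ∈ s, P i * L i ^ (p - 1)) ^ p⁻¹) ^ p :=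
        rpow_le_rpow (sum_nonneg fun i _ => rpow_nonneg (hP i) _) holder (by positivity)
    _ = (∑ i ∈ s, P i * L i ^ (p - 1)) * (∑ i ∈ s, (L i)⁻¹) ^ (p - 1) := by
        rw [mul_rpow (rpow_nonneg hT _) (rpow_nonneg hS _), rpow_inv_rpow hS hp0,
          ← rpow_mul hT, sub_mul, inv_mul_cancel₀ hp0, one_mul, mul_comm]

theorem IsPMF.sum_rpow_pos {X : Type*} [Fintype X] {P : X → ℝ} (hP : IsPMF P) (α : ℝ) :
    0 < ∑ x, P x ^ α := by
  obtain ⟨x, -, hx⟩ := exists_ne_zero_of_sum_ne_zero (hP.2.trans_ne one_ne_zero)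
  exact sum_pos' (fun x _ => rpow_nonneg (hP.1 x) _)
    ⟨x, mem_univ x, rpow_pos_of_pos ((hP.1 x).lt_of_ne' hx) _⟩

theorem two_rpow_one_sub_mul_renyiEntropy {X : Type*} [Fintype X] {α : ℝ} (hα : α ≠ 1)
    {P : X → ℝ} (hQ : 0 < ∑ x, P x ^ α) :
    (2 : ℝ) ^ ((1 - α) * renyiEntropy α P) = ∑ x, P x ^ α := by
  rw [renyiEntropy, ← mul_assoc, mul_inv_cancel₀ (sub_ne_zero.2 hα.symm), one_mul,
    rpow_logb two_pos one_lt_two.ne' hQ]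

/-- `E[L(X)^ρ] ≥ 2^{ρ·[H_{1/(1+ρ)}(P) − log₂ M]}`. -/
theorem rho_moment_listSize_ge
    {X : Type*} [Fintype X] {M : ℕ} (hM : 0 < M) (f : X → Fin M)
    (P : X → ℝ) (hP : IsPMF P) (ρ : ℝ) (hρ : 0 < ρ) :
    ∑ x, P x * (listSize f x : ℝ) ^ ρ ≥
      (2 : ℝ) ^ (ρ * (renyiEntropy (1 / (1 + ρ)) P - Real.logb 2 (M : ℝ))) := by
  have hM' : (0 : ℝ) < M := Nat.cast_pos.2 hM
  have hL : ∀ x, (0 : ℝ) < listSize f x := fun x => Nat.cast_pos.2 (listSize_pos f x)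
  have hα : 1 / (1 + ρ) ≠ 1 := by rw [Ne, div_eq_one_iff_eq (by positivity)]; linarith
  have hexponent : ρ * (renyiEntropy (1 / (1 + ρ)) P - logb 2 M) =
      (1 - 1 / (1 + ρ)) * renyiEntropy (1 / (1 + ρ)) P * (1 + ρ) - logb 2 M * ρ := by
    field_simp
    ring
  rw [ge_iff_le, hexponent, rpow_sub two_pos, rpow_mul zero_le_two _ (1 + ρ),
    rpow_mul zero_le_two _ ρ, two_rpow_one_sub_mul_renyiEntropy hα (hP.sum_rpow_pos _),
    rpow_logb two_pos one_lt_two.ne' hM', div_le_iff₀ (rpow_pos_of_pos hM' ρ)]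
  calc (∑ x, P x ^ (1 / (1 + ρ))) ^ (1 + ρ)
      ≤ (∑ x, P x * (listSize f x : ℝ) ^ ρ) * (∑ x, (listSize f x : ℝ)⁻¹) ^ ρ := by
        simpa only [add_sub_cancel_left, one_div] using
          sum_rpow_inv_rpow_le_sum_mul_rpow_mul univ (le_add_of_nonneg_right hρ.le) hP.1 hL
    _ ≤ (∑ x, P x * (listSize f x : ℝ) ^ ρ) * M ^ ρ := by
        gcongr
        · exact sum_nonneg fun x _ => mul_nonneg (hP.1 x) (rpow_nonneg (hL x).le ρ)
        · exact sum_inv_listSize_le f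
end

section
/- Let P_{XY} be a joint PMF on the finite set X × Y, let f : X → {1,…,M_X} and g : Y → {1,…,M_Y}, let L(x,y) = |{(x',y') ∈ X × Y : f(x') = f(x) ∧ g(y') = g(y)}|, and let ρ > 0 with ρ̃ = 1/(1+ρ). Then E[L(X,Y)^ρ] ≥ 2^{ρ·[H_{ρ̃}(P_{XY}) + K_{ρ̃}(X;Y) − log₂(M_X·M_Y)]}, where the expectation is with respect to (X,Y) ~ P_{XY}. -/
/-- Relative `α`-entropy `Δ_α(P‖Q)` (base-2 logarithm). -/
noncomputable def relAlphaEntropy {X : Type*} [Fintype X] (α : ℝ) (P Q : X → ℝ) : ℝ :=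
  (α / (1 - α)) * Real.logb 2 (∑ x, P x * Q x ^ (α - 1))
    + Real.logb 2 (∑ x, Q x ^ α)
    - (1 - α)⁻¹ * Real.logb 2 (∑ x, P x ^ α)

/-- The dependence measure `K_α(X;Y)`: the minimum of `Δ_α(P_{XY}‖Q_X Q_Y)` over all PMFs
`Q_X` and `Q_Y`.  (Restricting to everywhere-positive `Q_X`, `Q_Y` gives the same value,
since by the convention `p/0 = ∞` any `Q` vanishing on the support of `P` yields an
infinite relative entropy, and `Δ_α` is continuous in positive `Q`.) -/
noncomputable def Kdep {X Y : Type*} [Fintype X] [Fintype Y] (α : ℝ) (P : X × Y → ℝ) : ℝ :=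
  sInf {r : ℝ | ∃ QX : X → ℝ, ∃ QY : Y → ℝ, IsPMF QX ∧ IsPMF QY ∧
    (∀ x, 0 < QX x) ∧ (∀ y, 0 < QY y) ∧
    r = relAlphaEntropy α P (fun p => QX p.1 * QY p.2)}

/-- The joint list size of `(x,y)` under the encoders `f` and `g`. -/
noncomputable def jointListSize {X Y : Type*} [Fintype X] [Fintype Y] {MX MY : ℕ}
    (f : X → Fin MX) (g : Y → Fin MY) (x : X) (y : Y) : ℕ :=
  (Finset.univ.filter (fun p : X × Y => f p.1 = f x ∧ g p.2 = g y)).card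

open Finset

noncomputable def fiberCard {Z β : Type*} [Fintype Z] [DecidableEq β] (F : Z → β) (z : Z) :
    ℕ :=
  #{z' | F z' = F z}

section FiberCard

variable {Z β : Type*} [Fintype Z] [DecidableEq β]

lemma fiberCard_pos (F : Z → β) (z : Z) : 0 < fiberCard F z :=
  card_pos.mpr ⟨z, by simp⟩

lemma sum_inv_fiberCard_le [Fintype β] (F : Z → β) :
    ∑ z, (fiberCard F z : ℝ)⁻¹ ≤ Fintype.card β := by
  have hfiber (b : β) : ∑ _z ∈ univ.filter (F · = b), (#{z' | F z' = b} : ℝ)⁻¹ ≤ 1 := by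
    rw [sum_const, nsmul_eq_mul]
    exact mul_inv_le_one
  calc ∑ z, (fiberCard F z : ℝ)⁻¹
      = ∑ b, ∑ _z ∈ univ.filter (F · = b), (#{z' | F z' = b} : ℝ)⁻¹ :=
        (sum_fiberwise' univ F fun b => (#{z' | F z' = b} : ℝ)⁻¹).symm
    _ ≤ ∑ _b : β, (1 : ℝ) := sum_le_sum fun b _ => hfiber b
    _ = Fintype.card β := by simp

end FiberCard

section RelAlphaEntropy

variable {X : Type*} [Fintype X]

lemma IsPMF.nonempty {P : X → ℝ} (hP : IsPMF P) : Nonempty X := by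
  by_contra h
  rw [not_nonempty_iff] at h
  simpa using hP.2

lemma isPMF_div_sum [Nonempty X] {q : X → ℝ} (hq : ∀ x, 0 < q x) :
    IsPMF fun x => q x / ∑ x', q x' := by
  have hsum : 0 < ∑ x', q x' := sum_pos (fun x _ => hq x) univ_nonempty
  exact ⟨fun x => (div_pos (hq x) hsum).le, by rw [← sum_div, div_self hsum.ne']⟩

lemma sum_mul_rpow_pos {P Q : X → ℝ} (hP : IsPMF P) (hQ : ∀ x, 0 < Q x) (β : ℝ) :
    0 < ∑ x, P x * Q x ^ β := by
  obtain ⟨x, -, hx⟩ : ∃ x ∈ univ, (0 : ℝ) < P x :=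
    exists_lt_of_sum_lt (by simp [hP.2])
  exact sum_pos' (fun x _ => mul_nonneg (hP.1 x) (Real.rpow_pos_of_pos (hQ x) β).le)
    ⟨x, mem_univ x, mul_pos hx (Real.rpow_pos_of_pos (hQ x) β)⟩

lemma sum_rpow_pos [Nonempty X] {Q : X → ℝ} (hQ : ∀ x, 0 < Q x) (β : ℝ) :
    0 < ∑ x, Q x ^ β :=
  sum_pos (fun x _ => Real.rpow_pos_of_pos (hQ x) β) univ_nonempty

lemma renyiEntropy_add_relAlphaEntropy (α : ℝ) (P Q : X → ℝ) :
    renyiEntropy α P + relAlphaEntropy α P Q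
      = α / (1 - α) * Real.logb 2 (∑ x, P x * Q x ^ (α - 1))
        + Real.logb 2 (∑ x, Q x ^ α) := by
  rw [renyiEntropy, relAlphaEntropy]
  ring

lemma renyiEntropy_add_relAlphaEntropy_nonneg {α : ℝ} (hα0 : 0 ≤ α) (hα1 : α < 1)
    {P Q : X → ℝ} (hP : IsPMF P) (hQ : IsPMF Q) (hQpos : ∀ x, 0 < Q x) :
    0 ≤ renyiEntropy α P + relAlphaEntropy α P Q := by
  have hQle : ∀ x, Q x ≤ 1 := fun x =>
    hQ.2 ▸ single_le_sum (fun i _ => hQ.1 i) (mem_univ x)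
  have hS1 : 1 ≤ ∑ x, P x * Q x ^ (α - 1) :=
    hP.2.symm.trans_le <| sum_le_sum fun x _ => le_mul_of_one_le_right (hP.1 x)
      (Real.one_le_rpow_of_pos_of_le_one_of_nonpos (hQpos x) (hQle x) (by linarith))
  have hS2 : 1 ≤ ∑ x, Q x ^ α :=
    hQ.2.symm.trans_le <| sum_le_sum fun x _ =>
      Real.self_le_rpow_of_le_one (hQ.1 x) (hQle x) hα1.le
  rw [renyiEntropy_add_relAlphaEntropy]
  have : 0 ≤ α / (1 - α) := div_nonneg hα0 (by linarith)
  have := Real.logb_nonneg one_lt_two hS1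
  have := Real.logb_nonneg one_lt_two hS2
  positivity

lemma relAlphaEntropy_const_mul {α c : ℝ} (hα : α ≠ 1) (hc : 0 < c) {P Q : X → ℝ}
    (hP : IsPMF P) (hQ : ∀ x, 0 < Q x) :
    relAlphaEntropy α P (fun x => c * Q x) = relAlphaEntropy α P Q := by
  have := hP.nonempty
  have hS1 : ∑ x, P x * (c * Q x) ^ (α - 1) = c ^ (α - 1) * ∑ x, P x * Q x ^ (α - 1) := by
    rw [mul_sum]
    refine sum_congr rfl fun x _ => ?_
    rw [Real.mul_rpow hc.le (hQ x).le]
    ring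
  have hS2 : ∑ x, (c * Q x) ^ α = c ^ α * ∑ x, Q x ^ α := by
    rw [mul_sum]
    exact sum_congr rfl fun x _ => Real.mul_rpow hc.le (hQ x).le
  have h1α : 1 - α ≠ 0 := sub_ne_zero.mpr hα.symm
  rw [relAlphaEntropy, relAlphaEntropy, hS1, hS2,
    Real.logb_mul (Real.rpow_pos_of_pos hc _).ne' (sum_mul_rpow_pos hP hQ _).ne',
    Real.logb_mul (Real.rpow_pos_of_pos hc _).ne' (sum_rpow_pos hQ _).ne',
    Real.logb_rpow_eq_mul_logb_of_pos hc, Real.logb_rpow_eq_mul_logb_of_pos hc]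
  field_simp
  ring

end RelAlphaEntropy

lemma Kdep_le_relAlphaEntropy {X Y : Type*} [Fintype X] [Fintype Y] {α : ℝ} (hα0 : 0 ≤ α)
    (hα1 : α < 1) {P : X × Y → ℝ} (hP : IsPMF P) {qX : X → ℝ} {qY : Y → ℝ}
    (hqX : ∀ x, 0 < qX x) (hqY : ∀ y, 0 < qY y) :
    Kdep α P ≤ relAlphaEntropy α P (fun p => qX p.1 * qY p.2) := by
  obtain ⟨x₀, y₀⟩ := hP.nonempty.some
  have : Nonempty X := ⟨x₀⟩
  have : Nonempty Y := ⟨y₀⟩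
  set cX := ∑ x, qX x
  set cY := ∑ y, qY y
  have hc : 0 < (cX * cY)⁻¹ := by
    have := sum_pos (fun x _ => hqX x) univ_nonempty
    have := sum_pos (fun y _ => hqY y) univ_nonempty
    positivity
  have hnormalize : (fun p : X × Y => qX p.1 / cX * (qY p.2 / cY))
      = fun p => (cX * cY)⁻¹ * (qX p.1 * qY p.2) := by
    funext p
    field_simp
  have hbdd : BddBelow {r : ℝ | ∃ QX : X → ℝ, ∃ QY : Y → ℝ, IsPMF QX ∧ IsPMF QY ∧
      (∀ x, 0 < QX x) ∧ (∀ y, 0 < QY y) ∧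
      r = relAlphaEntropy α P (fun p => QX p.1 * QY p.2)} := by
    refine ⟨-renyiEntropy α P, ?_⟩
    rintro r ⟨QX, QY, hQX, hQY, hQXpos, hQYpos, rfl⟩
    have hQ : IsPMF fun p : X × Y => QX p.1 * QY p.2 :=
      ⟨fun p => mul_nonneg (hQX.1 p.1) (hQY.1 p.2), by
        rw [Fintype.sum_prod_type' fun x y => QX x * QY y, ← Fintype.sum_mul_sum, hQX.2, hQY.2,
          one_mul]⟩
    have := renyiEntropy_add_relAlphaEntropy_nonneg hα0 hα1 hP hQ
      fun p => mul_pos (hQXpos p.1) (hQYpos p.2)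
    linarith
  rw [← relAlphaEntropy_const_mul hα1.ne hc hP fun p => mul_pos (hqX p.1) (hqY p.2),
    ← hnormalize]
  exact csInf_le hbdd ⟨_, _, isPMF_div_sum hqX, isPMF_div_sum hqY,
    fun x => div_pos (hqX x) (sum_pos (fun x _ => hqX x) univ_nonempty),
    fun y => div_pos (hqY y) (sum_pos (fun y _ => hqY y) univ_nonempty), rfl⟩

lemma two_rpow_renyiEntropy_add_relAlphaEntropy_le {X : Type*} [Fintype X] {ρ M : ℝ}
    (hρ : 0 < ρ) {P Q : X → ℝ} (hP : IsPMF P) (hQ : ∀ x, 0 < Q x)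
    (hM : ∑ x, Q x ^ (1 / (1 + ρ)) ≤ M) :
    (2 : ℝ) ^ (ρ * (renyiEntropy (1 / (1 + ρ)) P + relAlphaEntropy (1 / (1 + ρ)) P Q
        - Real.logb 2 M)) ≤ ∑ x, P x * Q x ^ (1 / (1 + ρ) - 1) := by
  have := hP.nonempty
  have hS₁ := sum_mul_rpow_pos hP hQ (1 / (1 + ρ) - 1)
  have hS₂ := sum_rpow_pos hQ (1 / (1 + ρ))
  have hlogM := Real.logb_le_logb_of_le one_lt_two hS₂ hM
  have hρα : ρ * (1 / (1 + ρ) / (1 - 1 / (1 + ρ))) = 1 := by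
    have h1ρ : 1 + ρ ≠ 0 := by positivity
    rw [one_sub_div h1ρ, add_sub_cancel_left, div_div_div_cancel_right₀ h1ρ,
      mul_one_div_cancel hρ.ne']
  calc (2 : ℝ) ^ (ρ * (renyiEntropy (1 / (1 + ρ)) P + relAlphaEntropy (1 / (1 + ρ)) P Q
        - Real.logb 2 M))
      ≤ 2 ^ Real.logb 2 (∑ x, P x * Q x ^ (1 / (1 + ρ) - 1)) := by
        refine Real.rpow_le_rpow_of_exponent_le one_le_two ?_
        rw [renyiEntropy_add_relAlphaEntropy, mul_sub, mul_add, ← mul_assoc, hρα]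
        linarith [mul_le_mul_of_nonneg_left hlogM hρ.le]
    _ = ∑ x, P x * Q x ^ (1 / (1 + ρ) - 1) := Real.rpow_logb two_pos (by norm_num) hS₁

section ListSize

variable {X Y : Type*} [Fintype X] [Fintype Y] {MX MY : ℕ} (f : X → Fin MX) (g : Y → Fin MY)

lemma jointListSize_eq_fiberCard (x : X) (y : Y) :
    jointListSize f g x y = fiberCard (fun p : X × Y => (f p.1, g p.2)) (x, y) := by
  simp only [jointListSize, fiberCard, Prod.ext_iff]

lemma jointListSize_eq_mul (x : X) (y : Y) :
    jointListSize f g x y = fiberCard f x * fiberCard g y := by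
  rw [jointListSize, fiberCard, fiberCard, ← card_product, ← filter_product, univ_product_univ]

lemma jointListSize_pos (x : X) (y : Y) : 0 < jointListSize f g x y :=
  jointListSize_eq_mul f g x y ▸ Nat.mul_pos (fiberCard_pos f x) (fiberCard_pos g y)

lemma sum_inv_jointListSize_le :
    ∑ p : X × Y, (jointListSize f g p.1 p.2 : ℝ)⁻¹ ≤ MX * MY := by
  simp_rw [jointListSize_eq_fiberCard]
  simpa using sum_inv_fiberCard_le (fun p : X × Y => (f p.1, g p.2))

lemma Kdep_le_relAlphaEntropy_jointListSize_rpow {α : ℝ} (hα0 : 0 ≤ α) (hα1 : α < 1)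
    {P : X × Y → ℝ} (hP : IsPMF P) (s : ℝ) :
    Kdep α P ≤ relAlphaEntropy α P fun p => (jointListSize f g p.1 p.2 : ℝ) ^ s := by
  have hprod : (fun p : X × Y => (jointListSize f g p.1 p.2 : ℝ) ^ s)
      = fun p => (fiberCard f p.1 : ℝ) ^ s * (fiberCard g p.2 : ℝ) ^ s := by
    funext p
    rw [jointListSize_eq_mul, Nat.cast_mul, Real.mul_rpow (Nat.cast_nonneg _) (Nat.cast_nonneg _)]
  rw [hprod]
  exact Kdep_le_relAlphaEntropy (qX := fun x => (fiberCard f x : ℝ) ^ s)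
    (qY := fun y => (fiberCard g y : ℝ) ^ s) hα0 hα1 hP
    (fun x => Real.rpow_pos_of_pos (Nat.cast_pos.mpr (fiberCard_pos f x)) s)
    (fun y => Real.rpow_pos_of_pos (Nat.cast_pos.mpr (fiberCard_pos g y)) s)

end ListSize

lemma rpow_neg_one_add_rpow_one_div {a ρ : ℝ} (ha : 0 ≤ a) (hρ : 1 + ρ ≠ 0) :
    (a ^ (-(1 + ρ))) ^ (1 / (1 + ρ)) = a⁻¹ := by
  rw [← Real.rpow_mul ha, show -(1 + ρ) * (1 / (1 + ρ)) = -1 by field_simp, Real.rpow_neg_one]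

lemma rpow_neg_one_add_rpow_one_div_sub_one {a ρ : ℝ} (ha : 0 ≤ a) (hρ : 1 + ρ ≠ 0) :
    (a ^ (-(1 + ρ))) ^ (1 / (1 + ρ) - 1) = a ^ ρ := by
  rw [← Real.rpow_mul ha, show -(1 + ρ) * (1 / (1 + ρ) - 1) = ρ by field_simp; ring]

theorem joint_rho_moment_ge_general
    {X Y : Type*} [Fintype X] [Fintype Y] {MX MY : ℕ}
    (f : X → Fin MX) (g : Y → Fin MY)
    (P : X × Y → ℝ) (hP : IsPMF P) (ρ : ℝ) (hρ : 0 < ρ) :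
    ∑ p : X × Y, P p * (jointListSize f g p.1 p.2 : ℝ) ^ ρ ≥
      (2 : ℝ) ^ (ρ * (renyiEntropy (1 / (1 + ρ)) P + Kdep (1 / (1 + ρ)) P
        - Real.logb 2 ((MX : ℝ) * (MY : ℝ)))) := by
  have h1ρ : 1 + ρ ≠ 0 := by positivity
  have hα0 : 0 ≤ 1 / (1 + ρ) := by positivity
  have hα1 : 1 / (1 + ρ) < 1 := (div_lt_one (by linarith)).mpr (by linarith)
  have hM : ∑ p : X × Y, ((jointListSize f g p.1 p.2 : ℝ) ^ (-(1 + ρ))) ^ (1 / (1 + ρ))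
      ≤ MX * MY := by
    simpa only [rpow_neg_one_add_rpow_one_div (Nat.cast_nonneg _) h1ρ]
      using sum_inv_jointListSize_le f g
  calc (2 : ℝ) ^ (ρ * (renyiEntropy (1 / (1 + ρ)) P + Kdep (1 / (1 + ρ)) P
        - Real.logb 2 ((MX : ℝ) * (MY : ℝ))))
      ≤ 2 ^ (ρ * (renyiEntropy (1 / (1 + ρ)) P
          + relAlphaEntropy (1 / (1 + ρ)) P
              (fun p => (jointListSize f g p.1 p.2 : ℝ) ^ (-(1 + ρ)))
          - Real.logb 2 ((MX : ℝ) * (MY : ℝ)))) := by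
        gcongr
        · norm_num
        · exact Kdep_le_relAlphaEntropy_jointListSize_rpow f g hα0 hα1 hP _
    _ ≤ ∑ p : X × Y,
          P p * ((jointListSize f g p.1 p.2 : ℝ) ^ (-(1 + ρ))) ^ (1 / (1 + ρ) - 1) :=
      two_rpow_renyiEntropy_add_relAlphaEntropy_le hρ hP
        (fun p => Real.rpow_pos_of_pos (Nat.cast_pos.mpr (jointListSize_pos f g _ _)) _) hM
    _ = ∑ p : X × Y, P p * (jointListSize f g p.1 p.2 : ℝ) ^ ρ := by
      simp only [rpow_neg_one_add_rpow_one_div_sub_one (Nat.cast_nonneg _) h1ρ]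

/-- `E[L(X,Y)^ρ] ≥ 2^{ρ·[H_{ρ̃}(P_{XY}) + K_{ρ̃}(X;Y) − log₂(M_X·M_Y)]}` with `ρ̃ = 1/(1+ρ)`. -/
theorem joint_rho_moment_ge
    {X Y : Type*} [Fintype X] [Fintype Y] {MX MY : ℕ} (hMX : 0 < MX) (hMY : 0 < MY)
    (f : X → Fin MX) (g : Y → Fin MY)
    (P : X × Y → ℝ) (hP : IsPMF P) (ρ : ℝ) (hρ : 0 < ρ) :
    ∑ p : X × Y, P p * (jointListSize f g p.1 p.2 : ℝ) ^ ρ ≥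
      (2 : ℝ) ^ (ρ * (renyiEntropy (1 / (1 + ρ)) P + Kdep (1 / (1 + ρ)) P
        - Real.logb 2 ((MX : ℝ) * (MY : ℝ)))) :=
  joint_rho_moment_ge_general f g P hP ρ hρ
end

section
/- Let P_{XY} be a joint PMF on the finite set X × Y with marginal P_X on X, let f : X → {1,…,M_X} and g : Y → {1,…,M_Y}, let L(x,y) = |{(x',y') ∈ X × Y : f(x') = f(x) ∧ g(y') = g(y)}|, and let ρ > 0 with ρ̃ = 1/(1+ρ). Then E[L(X,Y)^ρ] ≥ 2^{ρ·[H_{ρ̃}(P_X) − log₂ M_X]}. -/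
/-!
Since `L(x,y) ≥ N(x) := |f⁻¹(f x)|`, the moment `E[L^ρ]` is at least `∑ₓ P_X(x) N(x)^ρ`.
Weighted Hölder with weights `1/N(x)` and exponent `1 + ρ` bounds `(∑ₓ P_X(x)^{1/(1+ρ)})^{1+ρ}`,
which is `2^{ρ H_{1/(1+ρ)}(P_X)}`, by `∑ₓ P_X(x) N(x)^ρ · (∑ₓ 1/N(x))^ρ`; and `∑ₓ 1/N(x)` is
the number of values taken by `f`, hence at most `M_X`.
-/

open Finset Real

theorem IsPMF.marginal_fst {X Y : Type*} [Fintype X] [Fintype Y] {P : X × Y → ℝ}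
    (hP : IsPMF P) : IsPMF fun x => ∑ y, P (x, y) :=
  ⟨fun x => sum_nonneg fun y _ => hP.1 (x, y), by rw [← Fintype.sum_prod_type, hP.2]⟩

theorem IsPMF.exists_pos {X : Type*} [Fintype X] {P : X → ℝ} (hP : IsPMF P) : ∃ x, 0 < P x := by
  obtain ⟨x, -, hx⟩ := exists_ne_zero_of_sum_ne_zero (hP.2.trans_ne one_ne_zero)
  exact ⟨x, (hP.1 x).lt_of_ne' hx⟩

theorem two_rpow_mul_renyiEntropy {X : Type*} [Fintype X] {α : ℝ} (hα : α ≠ 1) {P : X → ℝ}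
    (hP : 0 < ∑ x, P x ^ α) : (2 : ℝ) ^ ((1 - α) * renyiEntropy α P) = ∑ x, P x ^ α := by
  rw [renyiEntropy, ← mul_assoc, mul_inv_cancel₀ (sub_ne_zero.2 hα.symm), one_mul,
    rpow_logb two_pos (by norm_num) hP]

theorem sum_inv_card_fiber_le_card {α β : Type*} [Fintype α] [Fintype β] [DecidableEq β]
    (f : α → β) : ∑ a, (#{a' | f a' = f a} : ℝ)⁻¹ ≤ Fintype.card β := by
  rw [← sum_fiberwise univ f]
  calc ∑ b, ∑ a with f a = b, (#{a' | f a' = f a} : ℝ)⁻¹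
      = ∑ b, (#{a | f a = b} : ℝ) * (#{a | f a = b} : ℝ)⁻¹ := by
        refine sum_congr rfl fun b _ => ?_
        rw [← nsmul_eq_mul, ← sum_const]
        exact sum_congr rfl fun a ha => by rw [(mem_filter.1 ha).2]
    _ ≤ ∑ _b : β, (1 : ℝ) := sum_le_sum fun b _ => mul_inv_le_one
    _ = Fintype.card β := by simp

theorem sum_rpow_inv_one_add_rpow_le {ι : Type*} (s : Finset ι) {ρ : ℝ} (hρ : 0 ≤ ρ)
    {Q N : ι → ℝ} (hQ : ∀ i, 0 ≤ Q i) (hN : ∀ i, 0 < N i) :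
    (∑ i ∈ s, Q i ^ (1 + ρ)⁻¹) ^ (1 + ρ) ≤
      (∑ i ∈ s, Q i * N i ^ ρ) * (∑ i ∈ s, (N i)⁻¹) ^ ρ := by
  have hp : 1 + ρ ≠ 0 := by positivity
  have holder := inner_le_weight_mul_Lp_of_nonneg s (p := 1 + ρ) (by linarith)
    (fun i => (N i)⁻¹) (fun i => N i * Q i ^ (1 + ρ)⁻¹) (fun i => (inv_pos.2 (hN i)).le)
    (fun i => mul_nonneg (hN i).le (rpow_nonneg (hQ i) _))
  have hwf : ∀ i, (N i)⁻¹ * (N i * Q i ^ (1 + ρ)⁻¹) = Q i ^ (1 + ρ)⁻¹ := fun i =>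
    inv_mul_cancel_left₀ (hN i).ne' _
  have hwfp : ∀ i, (N i)⁻¹ * (N i * Q i ^ (1 + ρ)⁻¹) ^ (1 + ρ) = Q i * N i ^ ρ := fun i => by
    rw [mul_rpow (hN i).le (rpow_nonneg (hQ i) _), rpow_inv_rpow (hQ i) hp,
      rpow_one_add' (hN i).le hp, mul_assoc, inv_mul_cancel_left₀ (hN i).ne', mul_comm]
  simp only [hwf, hwfp] at holder
  have hU : 0 ≤ ∑ i ∈ s, (N i)⁻¹ := sum_nonneg fun i _ => (inv_pos.2 (hN i)).le
  have hT : 0 ≤ ∑ i ∈ s, Q i * N i ^ ρ :=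
    sum_nonneg fun i _ => mul_nonneg (hQ i) (rpow_nonneg (hN i).le _)
  calc (∑ i ∈ s, Q i ^ (1 + ρ)⁻¹) ^ (1 + ρ)
      ≤ ((∑ i ∈ s, (N i)⁻¹) ^ (1 - (1 + ρ)⁻¹) * (∑ i ∈ s, Q i * N i ^ ρ) ^ (1 + ρ)⁻¹) ^ (1 + ρ) :=
        rpow_le_rpow (sum_nonneg fun i _ => rpow_nonneg (hQ i) _) holder (by positivity)
    _ = (∑ i ∈ s, Q i * N i ^ ρ) * (∑ i ∈ s, (N i)⁻¹) ^ ρ := by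
        rw [mul_rpow (rpow_nonneg hU _) (rpow_nonneg hT _), rpow_inv_rpow hT hp, ← rpow_mul hU,
          sub_mul, inv_mul_cancel₀ hp, one_mul, add_sub_cancel_left, mul_comm]

theorem card_fiber_le_jointListSize {X Y : Type*} [Fintype X] [Fintype Y] {MX MY : ℕ}
    (f : X → Fin MX) (g : Y → Fin MY) (x : X) (y : Y) :
    #{x' | f x' = f x} ≤ jointListSize f g x y :=
  card_le_card_of_injOn (fun x' => (x', y)) (fun x' hx' => by simpa using hx')
    (fun _ _ _ _ h => congrArg Prod.fst h)

theorem sum_marginal_mul_card_fiber_rpow_le {X Y : Type*} [Fintype X] [Fintype Y] {MX MY : ℕ}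
    (f : X → Fin MX) (g : Y → Fin MY) {P : X × Y → ℝ} (hP : ∀ p, 0 ≤ P p) {ρ : ℝ} (hρ : 0 ≤ ρ) :
    ∑ x, (∑ y, P (x, y)) * (#{x' | f x' = f x} : ℝ) ^ ρ ≤
      ∑ p : X × Y, P p * (jointListSize f g p.1 p.2 : ℝ) ^ ρ := by
  simp only [sum_mul, Fintype.sum_prod_type]
  gcongr with x _ y _
  · exact hP _
  · exact card_fiber_le_jointListSize f g x y

theorem joint_rho_moment_ge_marginal_general
    {X Y : Type*} [Fintype X] [Fintype Y] {MX MY : ℕ}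
    (f : X → Fin MX) (g : Y → Fin MY)
    (P : X × Y → ℝ) (hP : IsPMF P) (ρ : ℝ) (hρ : 0 < ρ) :
    ∑ p : X × Y, P p * (jointListSize f g p.1 p.2 : ℝ) ^ ρ ≥
      (2 : ℝ) ^ (ρ * (renyiEntropy (1 / (1 + ρ)) (fun x => ∑ y, P (x, y))
        - Real.logb 2 (MX : ℝ))) := by
  set Q : X → ℝ := fun x => ∑ y, P (x, y)
  set N : X → ℝ := fun x => (#{x' | f x' = f x} : ℝ)
  have hQ : IsPMF Q := hP.marginal_fst
  have hN : ∀ x, 0 < N x := fun x => Nat.cast_pos.2 (card_pos.2 ⟨x, by simp⟩)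
  have hMX : (0 : ℝ) < MX := by
    obtain ⟨p, -⟩ := hP.exists_pos
    exact Nat.cast_pos.2 (f p.1).pos
  have hrenyi : (2 : ℝ) ^ (ρ * renyiEntropy (1 / (1 + ρ)) Q) =
      (∑ x, Q x ^ (1 / (1 + ρ))) ^ (1 + ρ) := by
    rw [← two_rpow_mul_renyiEntropy (by simpa using hρ.ne') (hQ.sum_rpow_pos _),
      ← rpow_mul two_pos.le]
    congr 1
    field_simp
    ring
  have hmoment := sum_marginal_mul_card_fiber_rpow_le f g hP.1 hρ.le
  have hU : 0 ≤ ∑ x, (N x)⁻¹ := sum_nonneg fun x _ => (inv_pos.2 (hN x)).le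
  rw [ge_iff_le, mul_sub, rpow_sub two_pos, hrenyi, mul_comm ρ, rpow_mul two_pos.le,
    rpow_logb two_pos (by norm_num) hMX, div_le_iff₀ (rpow_pos_of_pos hMX ρ), one_div]
  calc (∑ x, Q x ^ (1 + ρ)⁻¹) ^ (1 + ρ) ≤ (∑ x, Q x * N x ^ ρ) * (∑ x, (N x)⁻¹) ^ ρ :=
        sum_rpow_inv_one_add_rpow_le univ hρ.le hQ.1 hN
    _ ≤ _ := by
        refine mul_le_mul hmoment (rpow_le_rpow hU ?_ hρ.le) (rpow_nonneg hU ρ)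
          (hmoment.trans' (sum_nonneg fun x _ => mul_nonneg (hQ.1 x) (rpow_nonneg (hN x).le ρ)))
        simpa using sum_inv_card_fiber_le_card f

/-- `E[L(X,Y)^ρ] ≥ 2^{ρ·[H_{1/(1+ρ)}(P_X) − log₂ M_X]}`, where `P_X` is the
marginal of `P_{XY}` on the first coordinate. -/
theorem joint_rho_moment_ge_marginal
    {X Y : Type*} [Fintype X] [Fintype Y] {MX MY : ℕ} (hMX : 0 < MX) (hMY : 0 < MY)
    (f : X → Fin MX) (g : Y → Fin MY)
    (P : X × Y → ℝ) (hP : IsPMF P) (ρ : ℝ) (hρ : 0 < ρ) :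
    ∑ p : X × Y, P p * (jointListSize f g p.1 p.2 : ℝ) ^ ρ ≥
      (2 : ℝ) ^ (ρ * (renyiEntropy (1 / (1 + ρ)) (fun x => ∑ y, P (x, y))
        - Real.logb 2 (MX : ℝ))) :=
  joint_rho_moment_ge_marginal_general f g P hP ρ hρ
end
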